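/- Time-additive scalings through state reduction (discrete, finite horizon, unit time blocks): suppose a state reduction with unit blocks exists, namely θ_{t+1}(h_t, u_t, w_{t+1}) = f_t(θ_t(h_t), u_t, w_{t+1}) and the kernels factor: ρ_{t,t+1}(h_t, ·) = ρ̃_t(θ_t(h_t), ·). Let the criterion be j(h_T) = Σ_{t=0}^{T-1} L_t(θ_t(h_t), u_t, w_{t+1}) + K(θ_T(h_T)), with nonnegative L_t, K. Define V̂_T = K and V̂_t(x) = inf_{u} Σ_{w} [ L_t(x,u,w) + V̂_{t+1}(f_t(x,u,w)) ] ρ̃_t(x,{w}). Then the history value functions of the optimization over history feedbacks satisfy V_t(h_t) = Σ_{s=0}^{t-1} L_s(θ_s(h_s), u_s, w_{s+1}) + V̂_t(θ_t(h_t)) for all t and all h_t. -/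
import Mathlib


open scoped ENNReal

/-- History space `H_t = W_0 × ∏_{s=0}^{t-1}(U_s × W_{s+1})`. -/
def Hist (W U : ℕ → Type) : ℕ → Type :=
  fun t => Nat.rec (motive := fun _ => Type) (W 0) (fun s ih => ih × U s × W (s + 1)) t

/-- Transport of a history along an equality of time indices. -/
def hcast {W U : ℕ → Type} {a b : ℕ} (e : a = b) (h : Hist W U a) : Hist W U b := e ▸ h

/-- Noise sequences `w_{t+1:t+n}`. -/
def NoiseSeqE (W : ℕ → Type) (t : ℕ) : ℕ → Type :=
  fun n => Nat.rec (motive := fun _ => Type) PUnit (fun m ih => ih × W (t + m + 1)) n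

/-- The flow `Φ_{t,t+n}^γ` generated by a family of history feedbacks `γ`. -/
def flowE {W U : ℕ → Type} (γ : ∀ s, Hist W U s → U s) :
    ∀ (n t : ℕ), Hist W U t → NoiseSeqE W t n → Hist W U (t + n)
  | 0, _, h, _ => h
  | n + 1, t, h, ws =>
      (flowE γ n t h ws.1, γ (t + n) (flowE γ n t h ws.1), ws.2)

/-- The product `∏_{s=t+1}^{t+n} ρ_{s-1,s}(Φ_{t,s-1}^γ(h_t, w_{t+1:s-1}), {w_s})` of the
one-step kernels evaluated along the flow. -/
noncomputable def probE {W U : ℕ → Type} (ρ : ∀ s, Hist W U s → W (s + 1) → ℝ≥0∞)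
    (γ : ∀ s, Hist W U s → U s) :
    ∀ (n t : ℕ), Hist W U t → NoiseSeqE W t n → ℝ≥0∞
  | 0, _, _, _ => 1
  | n + 1, t, h, ws => probE ρ γ n t h ws.1 * ρ (t + n) (flowE γ n t h ws.1) ws.2

/-- The value function at time `t` (with `n = T - t` remaining steps): the infimum over
history feedbacks of the expected criterion
`Σ_{w_{t+1:T}} j(Φ_{t,T}^γ(h_t, w_{t+1:T})) ∏_{s=t+1}^{T} ρ_{s-1,s}(⋯, {w_s})`. -/
noncomputable def Val {W U : ℕ → Type} (ρ : ∀ s, Hist W U s → W (s + 1) → ℝ≥0∞)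
    (T : ℕ) (j : Hist W U T → ℝ≥0∞) (n t : ℕ) (e : t + n = T) (h : Hist W U t) : ℝ≥0∞ :=
  ⨅ γ : ∀ s, Hist W U s → U s, ∑' ws : NoiseSeqE W t n,
    j (hcast e (flowE γ n t h ws)) * probE ρ γ n t h ws

/-- Transport of a state along an equality of time indices. -/
def xcast {X : ℕ → Type} {a b : ℕ} (e : a = b) (x : X a) : X b := e ▸ x

/-- The accumulated instantaneous cost
`Σ_{s=0}^{t-1} L_s(θ_s(h_s), u_s, w_{s+1})` along a history `h_t`. -/
noncomputable def accCost {W U X : ℕ → Type} (θ : ∀ s, Hist W U s → X s)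
    (L : ∀ s, X s → U s → W (s + 1) → ℝ≥0∞) : ∀ t, Hist W U t → ℝ≥0∞
  | 0, _ => 0
  | t + 1, h => accCost θ L t h.1 + L t (θ t h.1) h.2.1 h.2.2

/-- The reduced value functions `V̂`, defined backwards from a terminal cost by
`V̂_t(x) = inf_u Σ_w [ L_t(x,u,w) + V̂_{t+1}(f_t(x,u,w)) ] ρ̃_t(x,{w})`. -/
noncomputable def Vhat {W U X : ℕ → Type}
    (L : ∀ s, X s → U s → W (s + 1) → ℝ≥0∞)
    (ρt : ∀ s, X s → W (s + 1) → ℝ≥0∞)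
    (f : ∀ s, X s → U s → W (s + 1) → X (s + 1)) :
    ∀ (n t : ℕ), (X (t + n) → ℝ≥0∞) → X t → ℝ≥0∞
  | 0, _, K, x => K x
  | n + 1, t, K, x =>
      ⨅ u : U t, ∑' w : W (t + 1),
        (L t x u w +
          Vhat L ρt f n (t + 1) (fun x' => K (xcast (by omega) x')) (f t x u w)) * ρt t x w

/-! ### Auxiliary lemmas -/

@[simp] lemma xcast_rfl {X : ℕ → Type} {a : ℕ} (e : a = a) (x : X a) : xcast e x = x := rfl

@[simp] lemma hcast_rfl {W U : ℕ → Type} {a : ℕ} (e : a = a) (h : Hist W U a) :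
    hcast e h = h := rfl

lemma xcast_xcast {X : ℕ → Type} {a b c : ℕ} (e : a = b) (e' : b = c) (x : X a) :
    xcast e' (xcast e x) = xcast (e.trans e') x := by subst e; subst e'; rfl

noncomputable def Bell {W U X : ℕ → Type}
    (L : ∀ s, X s → U s → W (s + 1) → ℝ≥0∞)
    (ρt : ∀ s, X s → W (s + 1) → ℝ≥0∞)
    (f : ∀ s, X s → U s → W (s + 1) → X (s + 1))
    (s : ℕ) (K : X (s + 1) → ℝ≥0∞) (x : X s) : ℝ≥0∞ :=
  ⨅ u : U s, ∑' w : W (s + 1), (L s x u w + K (f s x u w)) * ρt s x w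

section VhatLemmas

variable {W U X : ℕ → Type}
  (L : ∀ s, X s → U s → W (s + 1) → ℝ≥0∞)
  (ρt : ∀ s, X s → W (s + 1) → ℝ≥0∞)
  (f : ∀ s, X s → U s → W (s + 1) → X (s + 1))

lemma Bell_cast {a b : ℕ} (e : a = b) (K : X (b + 1) → ℝ≥0∞) (x : X a) :
    Bell L ρt f a (fun y => K (xcast (by omega) y)) x = Bell L ρt f b K (xcast e x) := by
  subst e; rfl

lemma Vhat_succ (n t : ℕ) (K : X (t + (n + 1)) → ℝ≥0∞) (x : X t) :
    Vhat L ρt f (n + 1) t K x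
      = Bell L ρt f t
          (fun y => Vhat L ρt f n (t + 1) (fun x' => K (xcast (by omega) x')) y) x := rfl

lemma Vhat_snoc : ∀ (n t : ℕ) (K : X (t + (n + 1)) → ℝ≥0∞) (x : X t),
    Vhat L ρt f (n + 1) t K x
      = Vhat L ρt f n t
          (fun x' => Bell L ρt f (t + n) (fun y => K (xcast (by omega) y)) x') x := by
  intro n
  induction n with
  | zero => intro t K x; rw [Vhat_succ]; rfl
  | succ n ih =>
    intro t K x
    rw [Vhat_succ, Vhat_succ]
    congr 1
    funext y
    rw [ih (t + 1)]
    congr 1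
    funext x'
    rw [← Bell_cast L ρt f (show t + 1 + n = t + (n + 1) by omega)
        (fun y' => K (xcast (by omega) y')) x']
    rfl

end VhatLemmas

section FlowLemmas

variable {W U : ℕ → Type} {γ γ' : ∀ s, Hist W U s → U s}

lemma flowE_congr (t : ℕ) (h : Hist W U t) :
    ∀ (n : ℕ), (∀ s, s < t + n → γ s = γ' s) → ∀ ws : NoiseSeqE W t n,
      flowE γ n t h ws = flowE γ' n t h ws
  | 0, _, _ => rfl
  | n + 1, hγ, ws => by
      have h1 := flowE_congr t h n (fun s hs => hγ s (by omega)) ws.1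
      show (flowE γ n t h ws.1, γ (t + n) (flowE γ n t h ws.1), ws.2)
          = (flowE γ' n t h ws.1, γ' (t + n) (flowE γ' n t h ws.1), ws.2)
      rw [h1, hγ (t + n) (by omega)]

lemma probE_congr (ρ : ∀ s, Hist W U s → W (s + 1) → ℝ≥0∞) (t : ℕ) (h : Hist W U t) :
    ∀ (n : ℕ), (∀ s, s < t + n → γ s = γ' s) → ∀ ws : NoiseSeqE W t n,
      probE ρ γ n t h ws = probE ρ γ' n t h ws
  | 0, _, _ => rfl
  | n + 1, hγ, ws => by
      show probE ρ γ n t h ws.1 * ρ (t + n) (flowE γ n t h ws.1) ws.2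
          = probE ρ γ' n t h ws.1 * ρ (t + n) (flowE γ' n t h ws.1) ws.2
      rw [probE_congr ρ t h n (fun s hs => hγ s (by omega)) ws.1,
        flowE_congr t h n (fun s hs => hγ s (by omega)) ws.1]

end FlowLemmas

lemma Val_strip {W U : ℕ → Type} [∀ s, Fintype (U s)] [∀ s, Nonempty (U s)]
    (ρ : ∀ s, Hist W U s → W (s + 1) → ℝ≥0∞) (n t : ℕ)
    (j : Hist W U (t + (n + 1)) → ℝ≥0∞) (h : Hist W U t) :
    Val ρ (t + (n + 1)) j (n + 1) t rfl h
      = Val ρ (t + n)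
          (fun h' => ⨅ u : U (t + n), ∑' w : W (t + n + 1), j (h', u, w) * ρ (t + n) h' w)
          n t rfl h := by
  unfold Val
  simp only [hcast_rfl]
  -- rewrite the (n+1)-step sum as an iterated sum
  have key : ∀ γ : ∀ s, Hist W U s → U s,
      (∑' ws : NoiseSeqE W t (n + 1), j (flowE γ (n + 1) t h ws) * probE ρ γ (n + 1) t h ws)
      = ∑' ws : NoiseSeqE W t n,
          (∑' w : W (t + n + 1),
            j (flowE γ n t h ws, γ (t + n) (flowE γ n t h ws), w)
              * ρ (t + n) (flowE γ n t h ws) w) * probE ρ γ n t h ws := by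
    intro γ
    rw [show (∑' ws : NoiseSeqE W t (n + 1),
          j (flowE γ (n + 1) t h ws) * probE ρ γ (n + 1) t h ws)
        = ∑' ws : NoiseSeqE W t n × W (t + n + 1),
            j (flowE γ (n + 1) t h ws) * probE ρ γ (n + 1) t h ws from rfl]
    rw [ENNReal.tsum_prod']
    refine tsum_congr fun ws => ?_
    rw [← ENNReal.tsum_mul_right]
    refine tsum_congr fun w => ?_
    show j (flowE γ n t h ws, γ (t + n) (flowE γ n t h ws), w)
        * (probE ρ γ n t h ws * ρ (t + n) (flowE γ n t h ws) w) = _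
    ring
  refine le_antisymm (le_iInf fun γ => ?_) (le_iInf fun γ => ?_)
  · -- choose an optimal last-stage control
    have hsel : ∀ h' : Hist W U (t + n), ∃ u : U (t + n),
        (∑' w : W (t + n + 1), j (h', u, w) * ρ (t + n) h' w)
        = ⨅ u : U (t + n), ∑' w : W (t + n + 1), j (h', u, w) * ρ (t + n) h' w :=
      fun h' => exists_eq_ciInf_of_finite
    choose g hg using hsel
    set γ' : ∀ s, Hist W U s → U s :=
      fun s => if hs : s = t + n then (by subst hs; exact g) else γ s with hγ'
    have hagree : ∀ s, s < t + n → γ' s = γ s := by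
      intro s hs
      simp only [hγ', dif_neg (by omega : ¬ s = t + n)]
    have hlast : γ' (t + n) = g := by
      simp only [hγ', dif_pos rfl]
    refine (iInf_le _ γ').trans ?_
    rw [key γ']
    refine le_of_eq (tsum_congr fun ws => ?_)
    rw [flowE_congr t h n hagree ws, probE_congr ρ t h n hagree ws, hlast, hg]
  · refine (iInf_le _ γ).trans ?_
    rw [key γ]
    refine Summable.tsum_le_tsum (fun ws => ?_) ENNReal.summable ENNReal.summable
    exact mul_le_mul_left (iInf_le _ (γ (t + n) (flowE γ n t h ws))) _

lemma Val_main {W U X : ℕ → Type}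
    [∀ s, Fintype (W s)] [∀ s, Nonempty (W s)] [∀ s, Fintype (U s)] [∀ s, Nonempty (U s)]
    (ρ : ∀ s, Hist W U s → W (s + 1) → ℝ≥0∞)
    (hpmf : ∀ s (h : Hist W U s), ∑' w : W (s + 1), ρ s h w = 1)
    (θ : ∀ s, Hist W U s → X s)
    (f : ∀ s, X s → U s → W (s + 1) → X (s + 1))
    (hred : ∀ (s : ℕ) (h : Hist W U s) (u : U s) (w : W (s + 1)),
      θ (s + 1) (h, u, w) = f s (θ s h) u w)
    (ρt : ∀ s, X s → W (s + 1) → ℝ≥0∞)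
    (hcomp : ∀ (s : ℕ) (h : Hist W U s) (w : W (s + 1)), ρ s h w = ρt s (θ s h) w)
    (L : ∀ s, X s → U s → W (s + 1) → ℝ≥0∞) (t : ℕ) (h : Hist W U t) :
    ∀ (n : ℕ) (K : X (t + n) → ℝ≥0∞),
      Val ρ (t + n) (fun hT => accCost θ L (t + n) hT + K (θ (t + n) hT)) n t rfl h
        = accCost θ L t h + Vhat L ρt f n t K (θ t h) := by
  intro n
  induction n with
  | zero =>
    intro K
    unfold Val
    simp only [hcast_rfl]
    have hγ : ∀ γ : ∀ s, Hist W U s → U s,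
        (∑' ws : NoiseSeqE W t 0,
          (accCost θ L (t + 0) (flowE γ 0 t h ws) + K (θ (t + 0) (flowE γ 0 t h ws)))
            * probE ρ γ 0 t h ws)
        = accCost θ L t h + K (θ t h) := by
      intro γ
      have h0 : (∑' ws : NoiseSeqE W t 0,
          (accCost θ L (t + 0) (flowE γ 0 t h ws) + K (θ (t + 0) (flowE γ 0 t h ws)))
            * probE ρ γ 0 t h ws)
          = ∑' _ : PUnit, (accCost θ L t h + K (θ t h)) * 1 := rfl
      rw [h0, tsum_eq_single PUnit.unit
        (fun b hb => absurd (Subsingleton.elim b PUnit.unit) hb), mul_one]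
    simp only [hγ, iInf_const]
    rfl
  | succ n ih =>
    intro K
    rw [Val_strip ρ n t (fun hT => accCost θ L (t + (n + 1)) hT + K (θ (t + (n + 1)) hT)) h]
    have hj : (fun h' : Hist W U (t + n) => ⨅ u : U (t + n), ∑' w : W (t + n + 1),
          (accCost θ L (t + (n + 1)) (h', u, w) + K (θ (t + (n + 1)) (h', u, w)))
            * ρ (t + n) h' w)
        = fun h' : Hist W U (t + n) =>
            accCost θ L (t + n) h' + Bell L ρt f (t + n) K (θ (t + n) h') := by
      funext h'
      have hsum : ∀ u : U (t + n),
          (∑' w : W (t + n + 1),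
            (accCost θ L (t + (n + 1)) (h', u, w) + K (θ (t + (n + 1)) (h', u, w)))
              * ρ (t + n) h' w)
          = accCost θ L (t + n) h'
            + ∑' w : W (t + n + 1),
                (L (t + n) (θ (t + n) h') u w + K (f (t + n) (θ (t + n) h') u w))
                  * ρt (t + n) (θ (t + n) h') w := by
        intro u
        have hρ1 : (∑' w : W (t + n + 1), ρt (t + n) (θ (t + n) h') w) = 1 := by
          rw [← hpmf (t + n) h']
          exact tsum_congr fun w => (hcomp (t + n) h' w).symm
        calc (∑' w : W (t + n + 1),
              (accCost θ L (t + (n + 1)) (h', u, w) + K (θ (t + (n + 1)) (h', u, w)))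
                * ρ (t + n) h' w)
            = ∑' w : W (t + n + 1),
              (accCost θ L (t + n) h' * ρt (t + n) (θ (t + n) h') w
                + (L (t + n) (θ (t + n) h') u w + K (f (t + n) (θ (t + n) h') u w))
                  * ρt (t + n) (θ (t + n) h') w) := by
              refine tsum_congr fun w => ?_
              show (accCost θ L (t + n) h' + L (t + n) (θ (t + n) h') u w
                    + K (θ (t + n + 1) (h', u, w))) * ρ (t + n) h' w = _
              rw [hred (t + n) h' u w, hcomp (t + n) h' w]
              ring
          _ = accCost θ L (t + n) h'
              + ∑' w : W (t + n + 1),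
                  (L (t + n) (θ (t + n) h') u w + K (f (t + n) (θ (t + n) h') u w))
                    * ρt (t + n) (θ (t + n) h') w := by
              rw [ENNReal.tsum_add, ENNReal.tsum_mul_left, hρ1, mul_one]
      simp only [hsum]
      rw [← ENNReal.add_iInf]
      rfl
    rw [hj, ih (Bell L ρt f (t + n) K), Vhat_snoc]
    rfl

/-- time-additive costs through state reduction (discrete, finite horizon,
unit time blocks). With unit-block state reduction `θ_{t+1}(h_t,u_t,w_{t+1}) =
f_t(θ_t(h_t),u_t,w_{t+1})`, factorized kernels `ρ_{t,t+1}(h_t,·) = ρ̃_t(θ_t(h_t),·)`, and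
time-additive criterion `j(h_T) = Σ_{t<T} L_t(θ_t(h_t),u_t,w_{t+1}) + K(θ_T(h_T))`, the
history value functions satisfy
`V_t(h_t) = Σ_{s<t} L_s(θ_s(h_s),u_s,w_{s+1}) + V̂_t(θ_t(h_t))` for all `t` and `h_t`. -/
theorem time_additive_reduction {W U X : ℕ → Type}
    [∀ s, Fintype (W s)] [∀ s, Nonempty (W s)] [∀ s, Fintype (U s)] [∀ s, Nonempty (U s)]
    [∀ s, Fintype (X s)]
    (T : ℕ) (ρ : ∀ s, Hist W U s → W (s + 1) → ℝ≥0∞)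
    (hpmf : ∀ s (h : Hist W U s), ∑' w : W (s + 1), ρ s h w = 1)
    (θ : ∀ s, Hist W U s → X s)
    (f : ∀ s, X s → U s → W (s + 1) → X (s + 1))
    (hred : ∀ (s : ℕ) (h : Hist W U s) (u : U s) (w : W (s + 1)),
      θ (s + 1) (h, u, w) = f s (θ s h) u w)
    (ρt : ∀ s, X s → W (s + 1) → ℝ≥0∞)
    (hcomp : ∀ (s : ℕ) (h : Hist W U s) (w : W (s + 1)), ρ s h w = ρt s (θ s h) w)
    (L : ∀ s, X s → U s → W (s + 1) → ℝ≥0∞) (K : X T → ℝ≥0∞)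
    (n t : ℕ) (e : t + n = T) (h : Hist W U t) :
    Val ρ T (fun hT => accCost θ L T hT + K (θ T hT)) n t e h
      = accCost θ L t h + Vhat L ρt f n t (fun x => K (xcast e x)) (θ t h) := by
  subst e
  exact Val_main ρ hpmf θ f hred ρt hcomp L t h n (fun x => K (xcast rfl x))
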